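/- The subset V0 = {(f,g) ∈ Z_p[t,t⁻¹]² : deg f < deg g} is invariant under the right actions v ↦ v·ρ(σ1⁻¹), v ↦ v·ρ(σ2), and v ↦ v·ρ(Δ3²); explicitly, the maps (f,g) ↦ (-t⁻¹(f-g), g), (f,g) ↦ (f, t(f-g)), and (f,g) ↦ (t³f, t³g) each map V0 into V0. -/

import Mathlib

open LaurentPolynomial

variable {p : ℕ}

/-- The top degree of a Laurent polynomial, with `deg 0 = ⊥` (i.e. `-∞`). -/
def ldeg {R : Type*} [Semiring R] (f : LaurentPolynomial R) : WithBot ℤ :=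
  f.coeff.support.max

/-- `V₀ = {(f,g) : deg f < deg g}`. -/
def V0 (p : ℕ) : Set (LaurentPolynomial (ZMod p) × LaurentPolynomial (ZMod p)) :=
  {v | ldeg v.1 < ldeg v.2}

/-- The right Burau action of `σ₁⁻¹`: `(f,g) ↦ (-t⁻¹(f-g), g)`. -/
noncomputable def actS1inv (v : LaurentPolynomial (ZMod p) × LaurentPolynomial (ZMod p)) :
    LaurentPolynomial (ZMod p) × LaurentPolynomial (ZMod p) :=
  (-(T (-1)) * (v.1 - v.2), v.2)

/-- The right Burau action of `σ₂`: `(f,g) ↦ (f, t(f-g))`. -/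
noncomputable def actS2 (v : LaurentPolynomial (ZMod p) × LaurentPolynomial (ZMod p)) :
    LaurentPolynomial (ZMod p) × LaurentPolynomial (ZMod p) :=
  (v.1, T 1 * (v.1 - v.2))

/-- The right Burau action of `Δ₃²`: `(f,g) ↦ (t³f, t³g)`. -/
noncomputable def actDelta2 (v : LaurentPolynomial (ZMod p) × LaurentPolynomial (ZMod p)) :
    LaurentPolynomial (ZMod p) × LaurentPolynomial (ZMod p) :=
  (T 3 * v.1, T 3 * v.2)

section Helpers

variable {R : Type*} [Ring R]

lemma mem_support_T_mul {n : ℤ} {f : LaurentPolynomial R} {a : ℤ} :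
    a ∈ (T n * f).coeff.support ↔ a - n ∈ f.coeff.support := by
  rw [Finsupp.mem_support_iff, Finsupp.mem_support_iff]
  have h : (T n * f).coeff a = f.coeff (a - n) := by
    show (AddMonoidAlgebra.single n 1 * f : AddMonoidAlgebra R ℤ).coeff a = _
    rw [AddMonoidAlgebra.coeff_single_mul_apply, one_mul, neg_add_eq_sub]
  rw [h]

lemma ldeg_eq_bot_iff {f : LaurentPolynomial R} : ldeg f = ⊥ ↔ f = 0 :=
  LaurentPolynomial.degree_eq_bot_iff

lemma ldeg_T_mul (n : ℤ) (f : LaurentPolynomial R) :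
    ldeg (T n * f) = (n : WithBot ℤ) + ldeg f := by
  rcases eq_or_ne f 0 with rfl | hf
  · simp [ldeg]
  · have h1 : ldeg f ≠ ⊥ := fun h => hf (ldeg_eq_bot_iff.mp h)
    obtain ⟨m, hm⟩ := WithBot.ne_bot_iff_exists.mp h1
    have hmem : m ∈ f.coeff.support := Finset.mem_of_max hm.symm
    rw [← hm, ← WithBot.coe_add]
    apply le_antisymm
    · apply Finset.max_le
      intro a ha
      have := mem_support_T_mul.mp ha
      have h2 : ((a - n : ℤ) : WithBot ℤ) ≤ ↑m := by
        rw [hm]; exact Finset.le_max this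
      rw [WithBot.coe_le_coe] at h2
      exact_mod_cast WithBot.coe_le_coe.mpr (by omega : a ≤ n + m)
    · apply Finset.le_max
      exact mem_support_T_mul.mpr (by simpa using hmem)

lemma ldeg_neg (f : LaurentPolynomial R) : ldeg (-f) = ldeg f := by
  unfold ldeg
  rw [AddMonoidAlgebra.coeff_neg, Finsupp.support_neg]

lemma ldeg_sub {f g : LaurentPolynomial R} (h : ldeg f < ldeg g) :
    ldeg (f - g) = ldeg g := by
  have hg : ldeg g ≠ ⊥ := fun hb => by simp [hb] at h
  obtain ⟨m, hm⟩ := WithBot.ne_bot_iff_exists.mp hg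
  have hmem : m ∈ g.coeff.support := Finset.mem_of_max hm.symm
  have hfm : f.coeff m = 0 := by
    by_contra hc
    have : (m : WithBot ℤ) ≤ ldeg f := Finset.le_max (Finsupp.mem_support_iff.mpr hc)
    exact absurd (this.trans_lt h) (by rw [hm]; exact lt_irrefl _)
  have hsub : m ∈ (f - g).coeff.support := by
    rw [Finsupp.mem_support_iff, AddMonoidAlgebra.coeff_sub, Finsupp.sub_apply, hfm, zero_sub, neg_ne_zero]
    exact Finsupp.mem_support_iff.mp hmem
  apply le_antisymm
  · apply Finset.max_le
    intro a ha
    have hane : f.coeff a - g.coeff a ≠ 0 := by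
      rw [← Finsupp.sub_apply, ← AddMonoidAlgebra.coeff_sub]; exact Finsupp.mem_support_iff.mp ha
    by_cases hfa : f.coeff a = 0
    · have hga : g.coeff a ≠ 0 := by intro h0; exact hane (by rw [hfa, h0, sub_zero])
      exact Finset.le_max (Finsupp.mem_support_iff.mpr hga)
    · have : (a : WithBot ℤ) ≤ ldeg f := Finset.le_max (Finsupp.mem_support_iff.mpr hfa)
      exact this.trans h.le
  · rw [← hm]; exact Finset.le_max hsub

end Helpers

/-- `V₀` is invariant under the right Burau actions of `σ₁⁻¹`, `σ₂` and `Δ₃²`. -/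
theorem V0_invariant (p : ℕ) (hp : 2 ≤ p) :
    (∀ v ∈ V0 p, actS1inv v ∈ V0 p) ∧
    (∀ v ∈ V0 p, actS2 v ∈ V0 p) ∧
    (∀ v ∈ V0 p, actDelta2 v ∈ V0 p) := by
  refine ⟨?_, ?_, ?_⟩
  · rintro ⟨f, g⟩ hv
    simp only [V0, Set.mem_setOf_eq] at hv ⊢
    simp only [actS1inv]
    have hg : ldeg g ≠ ⊥ := fun hb => by simp [hb] at hv
    obtain ⟨m, hm⟩ := WithBot.ne_bot_iff_exists.mp hg
    have : -(T (-1) : LaurentPolynomial (ZMod p)) * (f - g) = T (-1) * (-(f - g)) := by ring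
    rw [this, ldeg_T_mul, ldeg_neg, ldeg_sub hv, ← hm, ← WithBot.coe_add, WithBot.coe_lt_coe]
    omega
  · rintro ⟨f, g⟩ hv
    simp only [V0, Set.mem_setOf_eq] at hv ⊢
    simp only [actS2]
    have hg : ldeg g ≠ ⊥ := fun hb => by simp [hb] at hv
    obtain ⟨m, hm⟩ := WithBot.ne_bot_iff_exists.mp hg
    rw [ldeg_T_mul, ldeg_sub hv]
    calc ldeg f < ldeg g := hv
    _ ≤ 1 + ldeg g := by
        rw [← hm, ← WithBot.coe_one, ← WithBot.coe_add, WithBot.coe_le_coe]; omega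
  · rintro ⟨f, g⟩ hv
    simp only [V0, Set.mem_setOf_eq] at hv ⊢
    simp only [actDelta2]
    rw [ldeg_T_mul, ldeg_T_mul]
    exact WithBot.add_lt_add_left (by simp) hv
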